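/- For all integers n > 1 and all real z, |Φ(z) - Φ_n(z)| < C/(n-1), where Φ_n(z) := Φ(z/√(1 + (z²-1)/n)), C := (k - 1/2)·e^{-k}·√(k/π), and k := 1 + √3/2. -/

import Mathlib

noncomputable def stdNormalCDF (x : ℝ) : ℝ :=
  ∫ t in Set.Iic x, (Real.sqrt (2 * Real.pi))⁻¹ * Real.exp (-t ^ 2 / 2)

open Real Set MeasureTheory

/-! Interpolate between the two arguments: for `0 ≤ r < 1` put `u r = z / √(1 + (z² - 1) r)`,
so that `u 0 = z` and `u (1/n)` is the argument of `Φ_n`. This `u` solves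
`u' = -u (u² - 1) / (2 (1 - r))`, hence `|d/dr Φ (u r)| = |u (u² - 1)| φ(u) / (2 (1 - r))`.
The factor `|u (u² - 1)| φ(u)` is maximal at `u² = 2 + √3`, a critical point of
`x (x - 1)² e^{-x}`, where it equals `2 C`. Integrating `C / (1 - r)` over `[0, 1/n]` gives
`|Φ z - Φ_n z| ≤ -C log (1 - 1/n) < C / (n - 1)`. -/

theorem hasDerivAt_integral_Iic {E : Type*} [NormedAddCommGroup E] [NormedSpace ℝ E]
    [CompleteSpace E] {f : ℝ → E} (hf : Integrable f) (hc : Continuous f) (x : ℝ) :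
    HasDerivAt (fun y => ∫ t in Iic y, f t) (f x) x := by
  refine ((intervalIntegral.integral_hasDerivAt_right (a := 0) hf.intervalIntegrable
    (hc.stronglyMeasurableAtFilter _ _) hc.continuousAt).const_add
    (∫ t in Iic 0, f t)).congr_of_eventuallyEq (Filter.Eventually.of_forall fun y => ?_)
  simp only [← intervalIntegral.integral_Iic_sub_Iic hf.integrableOn hf.integrableOn,
    add_sub_cancel]

noncomputable def stdNormalPDF (x : ℝ) : ℝ := (√(2 * π))⁻¹ * exp (-x ^ 2 / 2)

theorem stdNormalPDF_nonneg (x : ℝ) : 0 ≤ stdNormalPDF x := by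
  unfold stdNormalPDF; positivity

theorem integrable_stdNormalPDF : Integrable stdNormalPDF := by
  refine ((integrable_exp_neg_mul_sq (b := 1 / 2) (by norm_num)).const_mul (√(2 * π))⁻¹).congr
    (Filter.Eventually.of_forall fun x => ?_)
  simp only [stdNormalPDF]
  ring_nf

theorem hasDerivAt_stdNormalCDF (x : ℝ) : HasDerivAt stdNormalCDF (stdNormalPDF x) x :=
  hasDerivAt_integral_Iic integrable_stdNormalPDF (by unfold stdNormalPDF; fun_prop) x

noncomputable def bump (x : ℝ) : ℝ := x * (x - 1) ^ 2 * exp (-x)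

theorem hasDerivAt_bump (x : ℝ) :
    HasDerivAt bump (-((x - 1) * (x ^ 2 - 4 * x + 1)) * exp (-x)) x := by
  have h := ((hasDerivAt_id' x).mul (((hasDerivAt_id' x).sub_const 1).pow 2)).mul
    (hasDerivAt_neg' x).exp
  exact h.congr_deriv (by simp only [Pi.mul_apply, Pi.pow_apply]; push_cast; ring)

theorem sqrt_three_sq : √3 ^ 2 = 3 := sq_sqrt (by norm_num)

theorem one_le_sqrt_three : 1 ≤ √3 := by
  rw [show (1 : ℝ) = √1 by simp]; exact sqrt_le_sqrt (by norm_num)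

theorem monotoneOn_bump : MonotoneOn bump (Icc 1 (2 + √3)) := by
  refine monotoneOn_of_deriv_nonneg (convex_Icc _ _)
    (fun x _ => (hasDerivAt_bump x).continuousAt.continuousWithinAt)
    (fun x _ => (hasDerivAt_bump x).differentiableAt.differentiableWithinAt) fun x hx => ?_
  rw [interior_Icc] at hx
  have hsq : (x - 2) ^ 2 ≤ √3 ^ 2 :=
    sq_le_sq' (by linarith [hx.1, one_le_sqrt_three]) (by linarith [hx.2])
  rw [(hasDerivAt_bump x).deriv]
  exact mul_nonneg (by nlinarith [hx.1, sqrt_three_sq]) (exp_pos _).le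

theorem antitoneOn_bump : AntitoneOn bump (Ici (2 + √3)) := by
  refine antitoneOn_of_deriv_nonpos (convex_Ici _)
    (fun x _ => (hasDerivAt_bump x).continuousAt.continuousWithinAt)
    (fun x _ => (hasDerivAt_bump x).differentiableAt.differentiableWithinAt) fun x hx => ?_
  rw [interior_Ici, mem_Ioi] at hx
  have hsq : √3 ^ 2 ≤ (x - 2) ^ 2 := pow_le_pow_left₀ (sqrt_nonneg 3) (by linarith) 2
  rw [(hasDerivAt_bump x).deriv]
  exact mul_nonpos_of_nonpos_of_nonneg (by nlinarith [one_le_sqrt_three, sqrt_three_sq])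
    (exp_pos _).le

theorem bump_le_bump_two_add_sqrt_three {x : ℝ} (hx : 0 ≤ x) : bump x ≤ bump (2 + √3) := by
  have hw : (1 : ℝ) ≤ 2 + √3 := by linarith [one_le_sqrt_three]
  rcases le_total x 1 with h1 | h1
  · -- on `[0, 1]` the crude bound `4/27` already lies below `bump 2 = 2 / e²`
    have hsmall : bump x ≤ 4 / 27 := by
      have hpoly : x * (x - 1) ^ 2 ≤ 4 / 27 := by
        nlinarith [mul_nonneg (sq_nonneg (x - 1 / 3)) (show 0 ≤ 4 / 3 - x by linarith)]
      have := exp_le_one_iff.mpr (neg_nonpos.mpr hx)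
      unfold bump; nlinarith [mul_nonneg hx (sq_nonneg (x - 1))]
    have htwo : 4 / 27 ≤ bump 2 := by
      have he : exp 2 < 9 := by
        rw [show (2 : ℝ) = 1 + 1 by norm_num, exp_add]; nlinarith [exp_one_lt_three, exp_pos 1]
      simp only [bump, exp_neg]
      rw [← div_eq_mul_inv, le_div_iff₀ (exp_pos 2)]; nlinarith
    have h2w : (2 : ℝ) ≤ 2 + √3 := by linarith [one_le_sqrt_three]
    exact hsmall.trans (htwo.trans (monotoneOn_bump ⟨by norm_num, h2w⟩ ⟨hw, le_rfl⟩ h2w))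
  · rcases le_total x (2 + √3) with h2 | h2
    · exact monotoneOn_bump ⟨h1, h2⟩ ⟨hw, le_rfl⟩ h2
    · exact antitoneOn_bump (mem_Ici.mpr le_rfl) h2 h2

noncomputable def normalApproxConst : ℝ :=
  (1 + √3 / 2 - 1 / 2) * exp (-(1 + √3 / 2)) * √((1 + √3 / 2) / π)

theorem normalApproxConst_pos : 0 < normalApproxConst := by
  have := sqrt_nonneg 3
  exact mul_pos (mul_pos (by linarith) (exp_pos _)) (sqrt_pos.mpr (by positivity))

theorem abs_mul_stdNormalPDF_le (u : ℝ) :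
    |u * (u ^ 2 - 1)| * stdNormalPDF u ≤ 2 * normalApproxConst := by
  have hpdf := stdNormalPDF_nonneg u
  refine (pow_le_pow_iff_left₀ (by positivity) (by linarith [normalApproxConst_pos])
    two_ne_zero).mp ?_
  have hlhs : (|u * (u ^ 2 - 1)| * stdNormalPDF u) ^ 2 = bump (u ^ 2) / (2 * π) := by
    simp only [stdNormalPDF, bump, mul_pow, sq_abs, inv_pow]
    rw [sq_sqrt (by positivity), ← exp_nat_mul]
    field_simp
    ring_nf
  have hrhs : (2 * normalApproxConst) ^ 2 = bump (2 + √3) / (2 * π) := by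
    simp only [normalApproxConst, bump, mul_pow]
    rw [sq_sqrt (by positivity), ← exp_nat_mul]
    field_simp
    ring_nf
  rw [hlhs, hrhs]
  exact div_le_div_of_nonneg_right (bump_le_bump_two_add_sqrt_three (sq_nonneg u)) (by positivity)

noncomputable def scaledArg (z r : ℝ) : ℝ := z / √(1 + (z ^ 2 - 1) * r)

theorem scaledArg_zero (z : ℝ) : scaledArg z 0 = z := by simp [scaledArg]

theorem hasDerivAt_scaledArg {z r : ℝ} (hD : 0 < 1 + (z ^ 2 - 1) * r) (hr : r ≠ 1) :
    HasDerivAt (scaledArg z) (-(scaledArg z r * (scaledArg z r ^ 2 - 1)) / (2 * (1 - r))) r := by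
  have hs := sqrt_pos.mpr hD
  have hs2 := sq_sqrt hD.le
  have h := (hasDerivAt_const r z).div
    ((((hasDerivAt_id' r).const_mul (z ^ 2 - 1)).const_add 1).sqrt hD.ne') hs.ne'
  refine h.congr_deriv ?_
  simp only [scaledArg]
  field_simp
  linear_combination -z * hs2

theorem abs_stdNormalPDF_mul_le_div_one_sub (u : ℝ) {r : ℝ} (hr : r < 1) :
    |stdNormalPDF u * (-(u * (u ^ 2 - 1)) / (2 * (1 - r)))| ≤ normalApproxConst / (1 - r) := by
  rw [abs_mul, abs_div, abs_neg, abs_of_pos (by linarith : (0 : ℝ) < 2 * (1 - r)),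
    abs_of_nonneg (stdNormalPDF_nonneg _)]
  calc _ = |u * (u ^ 2 - 1)| * stdNormalPDF u / (2 * (1 - r)) := by ring
    _ ≤ 2 * normalApproxConst / (2 * (1 - r)) := by
      gcongr ?_ / _; exact abs_mul_stdNormalPDF_le u
    _ = normalApproxConst / (1 - r) := mul_div_mul_left _ _ two_ne_zero

theorem abs_stdNormalCDF_scaledArg_sub_le (z : ℝ) {x : ℝ} (hx0 : 0 ≤ x) (hx1 : x < 1) :
    |stdNormalCDF (scaledArg z x) - stdNormalCDF z| ≤ -(normalApproxConst * log (1 - x)) := by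
  have hderiv (r : ℝ) (hr : r ∈ Icc 0 x) :
      HasDerivAt (fun r => stdNormalCDF (scaledArg z r) - stdNormalCDF z)
        (stdNormalPDF (scaledArg z r) *
          (-(scaledArg z r * (scaledArg z r ^ 2 - 1)) / (2 * (1 - r)))) r := by
    have hD : 0 < 1 + (z ^ 2 - 1) * r := by nlinarith [hr.1, hr.2, sq_nonneg z]
    exact ((hasDerivAt_stdNormalCDF _).comp r
      (hasDerivAt_scaledArg hD (by linarith [hr.2]))).sub_const _
  have hlog (r : ℝ) (hr : r ∈ Icc 0 x) :
      HasDerivAt (fun r => -(normalApproxConst * log (1 - r))) (normalApproxConst / (1 - r)) r :=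
    ((((hasDerivAt_id' r).const_sub 1).log (by linarith [hr.2])).const_mul
      normalApproxConst).neg.congr_deriv (by ring)
  simpa using image_norm_le_of_norm_deriv_right_le_deriv_boundary' (a := 0) (b := x)
    (fun r hr => (hderiv r hr).continuousAt.continuousWithinAt)
    (fun r hr => (hderiv r (Ico_subset_Icc_self hr)).hasDerivWithinAt)
    (by simp [scaledArg_zero])
    (fun r hr => (hlog r hr).continuousAt.continuousWithinAt)
    (fun r hr => (hlog r (Ico_subset_Icc_self hr)).hasDerivWithinAt)
    (fun r hr => abs_stdNormalPDF_mul_le_div_one_sub _ (by linarith [hr.2]))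
    ⟨hx0, le_rfl⟩

theorem neg_log_one_sub_lt {x : ℝ} (h0 : 0 < x) (h1 : x < 1) : -log (1 - x) < x / (1 - x) := by
  have h1x : 0 < 1 - x := sub_pos.mpr h1
  rw [← log_inv]
  calc log (1 - x)⁻¹ < (1 - x)⁻¹ - 1 :=
        log_lt_sub_one_of_pos (inv_pos.mpr h1x) (inv_ne_one.mpr (by linarith))
    _ = x / (1 - x) := by field_simp; ring

theorem Phi_n_close_to_Phi (n : ℕ) (hn : 1 < n) (z : ℝ) :
    |stdNormalCDF z - stdNormalCDF (z / Real.sqrt (1 + (z ^ 2 - 1) / n))| <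
      ((1 + Real.sqrt 3 / 2 - 1 / 2) * Real.exp (-(1 + Real.sqrt 3 / 2)) *
        Real.sqrt ((1 + Real.sqrt 3 / 2) / Real.pi)) / (n - 1) := by
  have hn' : (1 : ℝ) < n := by exact_mod_cast hn
  have hx0 : 0 < 1 / (n : ℝ) := by positivity
  have hx1 : 1 / (n : ℝ) < 1 := (div_lt_one (by linarith)).mpr hn'
  calc |stdNormalCDF z - stdNormalCDF (z / √(1 + (z ^ 2 - 1) / n))|
      = |stdNormalCDF (scaledArg z (1 / n)) - stdNormalCDF z| := by
        rw [abs_sub_comm, scaledArg, mul_one_div]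
    _ ≤ normalApproxConst * -log (1 - 1 / n) := by
        simpa using abs_stdNormalCDF_scaledArg_sub_le z hx0.le hx1
    _ < normalApproxConst * (1 / n / (1 - 1 / n)) :=
        mul_lt_mul_of_pos_left (neg_log_one_sub_lt hx0 hx1) normalApproxConst_pos
    _ = normalApproxConst / (n - 1) := by
        field_simp
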